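/- Let X be a real random variable with E[exp(μX)] ≤ exp(μ²ε²/2) for all μ ∈ ℝ, for some ε > 0, and let ξ be a random variable on the same probability space with |ξ| ≤ 1 almost surely. Then for every positive integer k, |E[(e^X − E_k(X))·ξ]| ≤ (C_k / k!) ε^k e^{ε²}, where E_k(X) = ∑_{j=0}^{k−1} X^j / j! and C_k = √(2^{k+1} k!). In particular, |E[(e^X − 1 − X)ξ]| ≤ 2ε² e^{ε²} and |E[(e^X − 1 − X − X²/2)ξ]| ≤ (5/3)ε³ e^{ε²}. -/

import Mathlib

/-!
Write `R_k = exp - E_k`. Since `R_{k+1}' = R_k` and `R_{k+1} 0 = 0`, induction on `k` with a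
fencing argument gives the pointwise bound `|R_k x| ≤ |x|^k (k + e^x) / (k+1)!`.
Against `|ξ| ≤ 1`, Cauchy–Schwarz then bounds `E|X|^k` by `√(E X^{2k})` and `E |X|^k e^X` by
`√(E X^{2k}) √(E e^{2X}) ≤ √(E X^{2k}) e^{ε²}`, and `k + e^{ε²} ≤ (k+1) e^{ε²}`.
Finally the sub-Gaussian moment bound `E X^{2k} ≤ 2 k! (2ε²)^k` comes from the layer-cake formula:
the Chernoff tail `P(X^{2k} ≥ t) ≤ 2 exp(-t^{1/k} / (2ε²))` integrates to a Gamma integral.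
-/

open MeasureTheory ProbabilityTheory Finset Real
open scoped NNReal

noncomputable def expTaylorRemainder (k : ℕ) (x : ℝ) : ℝ :=
  exp x - ∑ j ∈ range k, x ^ j / j.factorial

lemma hasDerivAt_sum_range_pow_div_factorial (k : ℕ) (x : ℝ) :
    HasDerivAt (fun y : ℝ => ∑ j ∈ range (k + 1), y ^ j / j.factorial)
      (∑ j ∈ range k, x ^ j / j.factorial) x := by
  have hterm (j : ℕ) : HasDerivAt (fun y : ℝ => y ^ (j + 1) / (j + 1).factorial)
      (x ^ j / j.factorial) x := by
    refine ((hasDerivAt_pow (j + 1) x).div_const _).congr_deriv ?_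
    rw [Nat.factorial_succ]
    push_cast
    field_simp
  simpa [sum_range_succ'] using (HasDerivAt.fun_sum (u := range k) fun j _ => hterm j).add_const 1

lemma hasDerivAt_expTaylorRemainder_succ (k : ℕ) (x : ℝ) :
    HasDerivAt (expTaylorRemainder (k + 1)) (expTaylorRemainder k x) x :=
  (hasDerivAt_exp x).sub (hasDerivAt_sum_range_pow_div_factorial k x)

@[simp]
lemma expTaylorRemainder_succ_zero (k : ℕ) : expTaylorRemainder (k + 1) 0 = 0 := by
  simp [expTaylorRemainder, sum_range_succ']

lemma one_sub_mul_exp_le_one (x : ℝ) : (1 - x) * exp x ≤ 1 := by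
  calc (1 - x) * exp x ≤ exp (-x) * exp x := by gcongr; linarith [add_one_le_exp (-x)]
    _ = 1 := by rw [← exp_add, neg_add_cancel, exp_zero]

-- Taking `a = ±1` covers both half-lines; the derivative bound reduces to `(1 - a z) e^{a z} ≤ 1`.
lemma abs_expTaylorRemainder_mul_le {a : ℝ} (ha : |a| = 1) (k : ℕ) {y : ℝ} (hy : 0 ≤ y) :
    |expTaylorRemainder k (a * y)| ≤ y ^ k * (k + exp (a * y)) / (k + 1).factorial := by
  induction k generalizing y with
  | zero => simp [expTaylorRemainder]
  | succ k ih =>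
    have hR (z : ℝ) : HasDerivAt (fun z => expTaylorRemainder (k + 1) (a * z))
        (a * expTaylorRemainder k (a * z)) z := by
      have := (hasDerivAt_expTaylorRemainder_succ k (a * z)).comp z ((hasDerivAt_id z).const_mul a)
      simpa [Function.comp_def, mul_comm] using this
    have hB (z : ℝ) :
        HasDerivAt (fun z => z ^ (k + 1) * (↑(k + 1) + exp (a * z)) / (k + 2).factorial)
        (((k + 1) * z ^ k * (k + 1 + exp (a * z)) + z ^ (k + 1) * (a * exp (a * z)))
          / (k + 2).factorial) z := by
      have hexp := ((hasDerivAt_id z).const_mul a).exp.const_add ((k + 1 : ℕ) : ℝ)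
      refine (((hasDerivAt_pow (k + 1) z).mul hexp).div_const _).congr_deriv ?_
      simp only [id, Nat.cast_succ, Nat.add_sub_cancel]
      ring
    refine image_norm_le_of_norm_deriv_right_le_deriv_boundary (a := 0) (b := y)
      (fun z _ => (hR z).continuousAt.continuousWithinAt) (fun z _ => (hR z).hasDerivWithinAt)
      (by simp) hB (fun z hz => ?_) ⟨hy, le_rfl⟩
    have hz : 0 ≤ z := hz.1
    rw [Real.norm_eq_abs, abs_mul, ha, one_mul]
    refine (ih hz).trans ?_
    rw [div_le_div_iff₀ (by positivity) (by positivity), Nat.factorial_succ (k + 1)]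
    have := mul_le_mul_of_nonneg_left (one_sub_mul_exp_le_one (a * z)) (pow_nonneg hz k)
    push_cast
    rw [pow_succ]
    nlinarith [mul_le_mul_of_nonneg_left this (Nat.cast_nonneg (α := ℝ) (k + 1).factorial)]

lemma abs_expTaylorRemainder_le (k : ℕ) (x : ℝ) :
    |expTaylorRemainder k x| ≤ |x| ^ k * (k + exp x) / (k + 1).factorial := by
  rcases le_total 0 x with hx | hx
  · simpa [abs_of_nonneg hx] using abs_expTaylorRemainder_mul_le (a := 1) (by simp) k hx
  · simpa [abs_of_nonpos hx] using
      abs_expTaylorRemainder_mul_le (a := -1) (by simp) k (neg_nonneg.2 hx)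

lemma integral_mul_le_sqrt_integral_sq_mul_sqrt_integral_sq {α : Type*} {mα : MeasurableSpace α}
    {μ : Measure α} {f g : α → ℝ} (hf0 : 0 ≤ᵐ[μ] f) (hg0 : 0 ≤ᵐ[μ] g) (hf : MemLp f 2 μ)
    (hg : MemLp g 2 μ) :
    ∫ a, f a * g a ∂μ ≤ √(∫ a, f a ^ 2 ∂μ) * √(∫ a, g a ^ 2 ∂μ) := by
  have := integral_mul_le_Lp_mul_Lq_of_nonneg Real.HolderConjugate.two_two hf0 hg0
    (by simpa using hf) (by simpa using hg)
  simpa only [rpow_two, sqrt_eq_rpow, one_div] using this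

namespace ProbabilityTheory.HasSubgaussianMGF

variable {Ω : Type*} {mΩ : MeasurableSpace Ω} {μ : Measure Ω} {X : Ω → ℝ} {c : ℝ≥0}

lemma measureReal_abs_ge_le [IsFiniteMeasure μ] (h : HasSubgaussianMGF X c μ) {s : ℝ}
    (hs : 0 ≤ s) : μ.real {ω | s ≤ |X ω|} ≤ 2 * exp (-s ^ 2 / (2 * c)) := by
  have hsub : {ω | s ≤ |X ω|} ⊆ {ω | s ≤ X ω} ∪ {ω | s ≤ (-X) ω} := fun ω hω =>
    le_abs.1 (show s ≤ |X ω| from hω)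
  calc μ.real {ω | s ≤ |X ω|} ≤ μ.real {ω | s ≤ X ω} + μ.real {ω | s ≤ (-X) ω} :=
        (measureReal_mono hsub).trans (measureReal_union_le _ _)
    _ ≤ 2 * exp (-s ^ 2 / (2 * c)) := by
        linarith [h.measure_ge_le hs, h.neg.measure_ge_le hs]

lemma integrable_pow (h : HasSubgaussianMGF X c μ) (n : ℕ) :
    Integrable (fun ω => X ω ^ n) μ :=
  integrable_pow_of_integrable_exp_mul one_ne_zero (h.integrable_exp_mul 1)
    (h.integrable_exp_mul (-1)) n

lemma measureReal_pow_ge_le [IsFiniteMeasure μ] (h : HasSubgaussianMGF X c μ) {k : ℕ}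
    (hk : k ≠ 0) {t : ℝ} (ht : 0 ≤ t) :
    μ.real {ω | t ≤ X ω ^ (2 * k)} ≤ 2 * exp (-(2 * (c : ℝ))⁻¹ * t ^ (k⁻¹ : ℝ)) := by
  set s := t ^ ((2 * k : ℕ) : ℝ)⁻¹
  have hsub : {ω | t ≤ X ω ^ (2 * k)} ⊆ {ω | s ≤ |X ω|} := fun ω hω => by
    have hω : t ≤ |X ω| ^ (2 * k) := by rwa [(even_two_mul k).pow_abs]
    calc s ≤ (|X ω| ^ (2 * k)) ^ ((2 * k : ℕ) : ℝ)⁻¹ := rpow_le_rpow ht hω (by positivity)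
      _ = |X ω| := pow_rpow_inv_natCast (abs_nonneg _) (by positivity)
  have hs2 : s ^ 2 = t ^ (k⁻¹ : ℝ) := by
    rw [← rpow_mul_natCast ht]
    congr 1
    push_cast
    field_simp
  refine (measureReal_mono hsub).trans ((h.measureReal_abs_ge_le (by positivity)).trans ?_)
  rw [hs2, neg_div, neg_mul, div_eq_inv_mul]

lemma integral_pow_two_mul_le [IsFiniteMeasure μ] (h : HasSubgaussianMGF X c μ) (hc : 0 < c)
    {k : ℕ} (hk : k ≠ 0) :
    ∫ ω, X ω ^ (2 * k) ∂μ ≤ 2 * k.factorial * (2 * c) ^ k := by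
  have hb : 0 < (2 * (c : ℝ))⁻¹ := by positivity
  have hp : 0 < (k⁻¹ : ℝ) := by positivity
  have htail_int :
      IntegrableOn (fun t : ℝ => 2 * exp (-(2 * (c : ℝ))⁻¹ * t ^ (k⁻¹ : ℝ))) (Set.Ioi 0) := by
    have := (integrableOn_rpow_mul_exp_neg_mul_rpow neg_one_lt_zero hp hb).const_mul 2
    simpa only [IntegrableOn, rpow_zero, one_mul] using this
  rw [(h.integrable_pow _).integral_eq_integral_meas_le
    (ae_of_all _ fun ω => (even_two_mul k).pow_nonneg _)]
  calc ∫ t in Set.Ioi 0, μ.real {ω | t ≤ X ω ^ (2 * k)}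
      ≤ ∫ t in Set.Ioi 0, 2 * exp (-(2 * (c : ℝ))⁻¹ * t ^ (k⁻¹ : ℝ)) :=
        integral_mono_of_nonneg (ae_of_all _ fun _ => measureReal_nonneg) htail_int
          ((ae_restrict_mem measurableSet_Ioi).mono fun t ht =>
            h.measureReal_pow_ge_le hk (le_of_lt ht))
    _ = 2 * k.factorial * (2 * c) ^ k := by
        have hexp : -1 / (k⁻¹ : ℝ) = -(k : ℝ) := by field_simp
        rw [integral_const_mul, integral_exp_neg_mul_rpow hp hb, hexp, one_div, inv_inv,
          Gamma_nat_eq_factorial, rpow_neg hb.le, rpow_natCast, inv_pow, inv_inv]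
        ring

lemma sq_abs_pow (x : ℝ) (k : ℕ) : (|x| ^ k) ^ 2 = x ^ (2 * k) := by
  rw [← pow_mul, mul_comm, (even_two_mul k).pow_abs]

lemma memLp_abs_pow (h : HasSubgaussianMGF X c μ) (k : ℕ) :
    MemLp (fun ω => |X ω| ^ k) 2 μ :=
  (memLp_two_iff_integrable_sq (by have := h.aemeasurable; fun_prop)).2
    (by simpa only [sq_abs_pow] using h.integrable_pow (2 * k))

lemma memLp_exp (h : HasSubgaussianMGF X c μ) : MemLp (fun ω => exp (X ω)) 2 μ := by
  simpa using h.memLp_exp_mul 1 2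

lemma integral_abs_pow_le_sqrt [IsProbabilityMeasure μ] (h : HasSubgaussianMGF X c μ) (k : ℕ) :
    ∫ ω, |X ω| ^ k ∂μ ≤ √(∫ ω, X ω ^ (2 * k) ∂μ) := by
  have := integral_mul_le_sqrt_integral_sq_mul_sqrt_integral_sq
    (ae_of_all μ fun ω => by positivity) (ae_of_all μ fun _ => zero_le_one) (h.memLp_abs_pow k)
    (memLp_const 1)
  simpa [sq_abs_pow] using this

lemma integral_abs_pow_mul_exp_le_sqrt (h : HasSubgaussianMGF X c μ) (k : ℕ) :
    ∫ ω, |X ω| ^ k * exp (X ω) ∂μ ≤ √(∫ ω, X ω ^ (2 * k) ∂μ) * exp c := by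
  refine (integral_mul_le_sqrt_integral_sq_mul_sqrt_integral_sq
    (ae_of_all μ fun ω => by positivity) (ae_of_all μ fun _ => (exp_pos _).le)
    (h.memLp_abs_pow k) h.memLp_exp).trans ?_
  simp only [sq_abs_pow]
  gcongr
  rw [sqrt_le_left (exp_pos _).le, ← exp_nat_mul]
  calc ∫ ω, exp (X ω) ^ 2 ∂μ = mgf X μ 2 := by simp only [mgf, ← exp_nat_mul]; norm_num
    _ ≤ exp ((2 : ℕ) * c) := (h.mgf_le 2).trans_eq (by ring_nf)

lemma abs_integral_expTaylorRemainder_mul_le_sqrt_moment [IsProbabilityMeasure μ]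
    (h : HasSubgaussianMGF X c μ) {ξ : Ω → ℝ} (hξ : ∀ᵐ ω ∂μ, |ξ ω| ≤ 1) (k : ℕ) :
    |∫ ω, expTaylorRemainder k (X ω) * ξ ω ∂μ|
      ≤ √(∫ ω, X ω ^ (2 * k) ∂μ) * exp c / k.factorial := by
  set m := √(∫ ω, X ω ^ (2 * k) ∂μ)
  have hpow := h.memLp_abs_pow k
  have hint_pow : Integrable (fun ω => k * |X ω| ^ k) μ := (hpow.integrable one_le_two).const_mul _
  have hint_prod : Integrable (fun ω => |X ω| ^ k * exp (X ω)) μ := hpow.integrable_mul h.memLp_exp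
  have hint :
      Integrable (fun ω => (k * |X ω| ^ k + |X ω| ^ k * exp (X ω)) / (k + 1).factorial) μ :=
    (hint_pow.add hint_prod).div_const _
  calc |∫ ω, expTaylorRemainder k (X ω) * ξ ω ∂μ|
      ≤ ∫ ω, (k * |X ω| ^ k + |X ω| ^ k * exp (X ω)) / (k + 1).factorial ∂μ := by
        rw [← norm_eq_abs]
        refine norm_integral_le_of_norm_le hint (hξ.mono fun ω hω => ?_)
        rw [norm_mul, norm_eq_abs, norm_eq_abs]
        calc |expTaylorRemainder k (X ω)| * |ξ ω| ≤ |expTaylorRemainder k (X ω)| :=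
              mul_le_of_le_one_right (abs_nonneg _) hω
          _ ≤ _ := (abs_expTaylorRemainder_le k (X ω)).trans_eq (by ring)
    _ = (k * ∫ ω, |X ω| ^ k ∂μ + ∫ ω, |X ω| ^ k * exp (X ω) ∂μ) / (k + 1).factorial := by
        rw [integral_div, integral_add hint_pow hint_prod, integral_const_mul]
    _ ≤ (k * m + m * exp c) / (k + 1).factorial := by
        gcongr
        exacts [h.integral_abs_pow_le_sqrt k, h.integral_abs_pow_mul_exp_le_sqrt k]
    _ ≤ m * exp c / k.factorial := by
        rw [Nat.factorial_succ, Nat.cast_mul, ← div_div,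
          div_le_div_iff_of_pos_right (by positivity), div_le_iff₀ (by positivity)]
        push_cast
        have hm : 0 ≤ m := sqrt_nonneg _
        nlinarith [mul_nonneg (mul_nonneg k.cast_nonneg hm)
          (sub_nonneg.2 (one_le_exp c.coe_nonneg))]

lemma abs_integral_expTaylorRemainder_mul_le [IsProbabilityMeasure μ]
    (h : HasSubgaussianMGF X c μ) (hc : 0 < c) {ξ : Ω → ℝ} (hξ : ∀ᵐ ω ∂μ, |ξ ω| ≤ 1) {k : ℕ}
    (hk : k ≠ 0) :
    |∫ ω, expTaylorRemainder k (X ω) * ξ ω ∂μ|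
      ≤ √(2 ^ (k + 1) * k.factorial) / k.factorial * √c ^ k * exp c := by
  have hmoment : 2 * k.factorial * (2 * (c : ℝ)) ^ k
      = 2 ^ (k + 1) * k.factorial * (√c ^ k) ^ 2 := by
    rw [← pow_mul, mul_comm k, pow_mul, sq_sqrt c.coe_nonneg]
    ring
  refine (h.abs_integral_expTaylorRemainder_mul_le_sqrt_moment hξ k).trans ?_
  calc √(∫ ω, X ω ^ (2 * k) ∂μ) * exp c / k.factorial
      ≤ √(2 * k.factorial * (2 * (c : ℝ)) ^ k) * exp c / k.factorial := by
        gcongr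
        exact h.integral_pow_two_mul_le hc hk
    _ = √(2 ^ (k + 1) * k.factorial) / k.factorial * √c ^ k * exp c := by
        rw [hmoment, sqrt_mul (by positivity), sqrt_sq (by positivity)]
        ring

end ProbabilityTheory.HasSubgaussianMGF

lemma expTaylorRemainder_two (x : ℝ) : expTaylorRemainder 2 x = exp x - 1 - x := by
  simp [expTaylorRemainder, sum_range_succ, sub_sub]

lemma expTaylorRemainder_three (x : ℝ) :
    expTaylorRemainder 3 x = exp x - 1 - x - x ^ 2 / 2 := by
  simp [expTaylorRemainder, sum_range_succ, sub_sub]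

theorem exp_taylor_remainder_bounded_weight_general
    {Ω : Type*} [MeasurableSpace Ω] (P : Measure Ω) [IsProbabilityMeasure P]
    (X : Ω → ℝ) (ε : ℝ) (hε : 0 < ε)
    (hint : ∀ μ : ℝ, Integrable (fun ω => Real.exp (μ * X ω)) P)
    (hmgf : ∀ μ : ℝ, ∫ ω, Real.exp (μ * X ω) ∂P ≤ Real.exp (μ ^ 2 * ε ^ 2 / 2))
    (ξ : Ω → ℝ) (hξ : ∀ᵐ ω ∂P, |ξ ω| ≤ 1) :
    (∀ k : ℕ, 0 < k →
      |∫ ω, (Real.exp (X ω) - ∑ j ∈ Finset.range k, X ω ^ j / j.factorial) * ξ ω ∂P|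
        ≤ Real.sqrt (2 ^ (k + 1) * k.factorial) / k.factorial
            * ε ^ k * Real.exp (ε ^ 2)) ∧
    |∫ ω, (Real.exp (X ω) - 1 - X ω) * ξ ω ∂P|
      ≤ 2 * ε ^ 2 * Real.exp (ε ^ 2) ∧
    |∫ ω, (Real.exp (X ω) - 1 - X ω - X ω ^ 2 / 2) * ξ ω ∂P|
      ≤ 5 / 3 * ε ^ 3 * Real.exp (ε ^ 2) := by
  have hc : 0 < (ε ^ 2).toNNReal := toNNReal_pos.2 (by positivity)
  have hX : HasSubgaussianMGF X (ε ^ 2).toNNReal P :=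
    ⟨hint, fun t => (hmgf t).trans_eq (by rw [coe_toNNReal _ (sq_nonneg ε)]; ring_nf)⟩
  have hbound (k : ℕ) (hk : 0 < k) :
      |∫ ω, expTaylorRemainder k (X ω) * ξ ω ∂P|
        ≤ √(2 ^ (k + 1) * k.factorial) / k.factorial * ε ^ k * exp (ε ^ 2) := by
    simpa [coe_toNNReal _ (sq_nonneg ε), sqrt_sq hε.le] using
      hX.abs_integral_expTaylorRemainder_mul_le hc hξ hk.ne'
  refine ⟨hbound, ?_, ?_⟩
  · have h16 : √(2 ^ (2 + 1) * (2 : ℕ).factorial) = 4 := by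
      rw [show (2 : ℝ) ^ (2 + 1) * (2 : ℕ).factorial = 4 ^ 2 by norm_num [Nat.factorial]]
      exact sqrt_sq (by norm_num)
    calc _ = |∫ ω, expTaylorRemainder 2 (X ω) * ξ ω ∂P| := by simp only [expTaylorRemainder_two]
      _ ≤ _ := hbound 2 two_pos
      _ = 2 * ε ^ 2 * exp (ε ^ 2) := by rw [h16]; norm_num [Nat.factorial]
  · have h96 : √(2 ^ (3 + 1) * (3 : ℕ).factorial) ≤ 10 := by
      rw [sqrt_le_left (by norm_num)]
      norm_num [Nat.factorial]
    calc _ = |∫ ω, expTaylorRemainder 3 (X ω) * ξ ω ∂P| := by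
          simp only [expTaylorRemainder_three]
      _ ≤ _ := hbound 3 three_pos
      _ ≤ 10 / (3 : ℕ).factorial * ε ^ 3 * exp (ε ^ 2) := by gcongr
      _ = 5 / 3 * ε ^ 3 * exp (ε ^ 2) := by norm_num [Nat.factorial]

/-- If `X` satisfies `E[exp(μX)] ≤ exp(μ²ε²/2)` for all real `μ`
(`ε > 0`) and `|ξ| ≤ 1` a.s., then for every positive integer `k`, with
`E_k(X) = ∑_{j<k} X^j/j!` and `C_k = √(2^{k+1} k!)`,
`|E[(e^X − E_k(X))ξ]| ≤ (C_k/k!) ε^k e^{ε²}`.  In particular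
`|E[(e^X − 1 − X)ξ]| ≤ 2ε² e^{ε²}` and
`|E[(e^X − 1 − X − X²/2)ξ]| ≤ (5/3)ε³ e^{ε²}`. -/
theorem exp_taylor_remainder_bounded_weight
    {Ω : Type*} [MeasurableSpace Ω] (P : Measure Ω) [IsProbabilityMeasure P]
    (X : Ω → ℝ) (ε : ℝ) (hε : 0 < ε)
    (hint : ∀ μ : ℝ, Integrable (fun ω => Real.exp (μ * X ω)) P)
    (hmgf : ∀ μ : ℝ, ∫ ω, Real.exp (μ * X ω) ∂P ≤ Real.exp (μ ^ 2 * ε ^ 2 / 2))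
    (ξ : Ω → ℝ) (hξm : AEStronglyMeasurable ξ P) (hξ : ∀ᵐ ω ∂P, |ξ ω| ≤ 1) :
    (∀ k : ℕ, 0 < k →
      |∫ ω, (Real.exp (X ω) - ∑ j ∈ Finset.range k, X ω ^ j / j.factorial) * ξ ω ∂P|
        ≤ Real.sqrt (2 ^ (k + 1) * k.factorial) / k.factorial
            * ε ^ k * Real.exp (ε ^ 2)) ∧
    |∫ ω, (Real.exp (X ω) - 1 - X ω) * ξ ω ∂P|
      ≤ 2 * ε ^ 2 * Real.exp (ε ^ 2) ∧
    |∫ ω, (Real.exp (X ω) - 1 - X ω - X ω ^ 2 / 2) * ξ ω ∂P|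
      ≤ 5 / 3 * ε ^ 3 * Real.exp (ε ^ 2) :=
  exp_taylor_remainder_bounded_weight_general P X ε hε hint hmgf ξ hξ
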